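/- (Type A_n, principal element.) Let n ≥ 1 and let ρ = ϖ₁ + ⋯ + ϖ_n ∈ ℝ^{n+1}, the vector whose i-th coordinate is (n+2−2i)/2 for i = 1, …, n+1. Set l = ⌊(n+2)/2⌋. Then the minimum over k ∈ {1, …, n} of ℓ_ρ⁻(ϖ_k) equals l and is attained at k = 1: ℓ_ρ⁻(ϖ₁) = l. Moreover, the only linear map of ℝ^{n+1} expressible as a composition of at most l simple reflections of type A_n and satisfying ⟨w ϖ₁, ρ⟩ < 0 is w = s_l ∘ s_{l−1} ∘ ⋯ ∘ s₁ (with s₁ applied first). -/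

import Mathlib

open scoped RealInnerProductSpace

/-- The `j`-th simple reflection of type `Aₙ` (`1 ≤ j ≤ n`), acting on `ℝ^{n+1}`:
it transposes the coordinates numbered `j` and `j+1` (in `1`-based numbering). -/
noncomputable def sA (n j : ℕ) :
    EuclideanSpace ℝ (Fin (n + 1)) → EuclideanSpace ℝ (Fin (n + 1)) :=
  fun v => WithLp.toLp 2 (fun i =>
    v ⟨(if (i : ℕ) + 1 = j then j else if (i : ℕ) = j then j - 1 else (i : ℕ)) % (n + 1),
      Nat.mod_lt _ (Nat.succ_pos n)⟩)

/-- The composition of the simple reflections indexed by the entries of `l`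
(the last entry of the list is applied first). -/
noncomputable def compA (n : ℕ) (l : List ℕ) :
    EuclideanSpace ℝ (Fin (n + 1)) → EuclideanSpace ℝ (Fin (n + 1)) :=
  l.foldr (fun j g => sA n j ∘ g) id

/-- The fundamental weight `ϖⱼ = e₁ + ⋯ + eⱼ − (j/(n+1))·ε` of type `Aₙ` (`1 ≤ j ≤ n`). -/
noncomputable def wtA (n j : ℕ) : EuclideanSpace ℝ (Fin (n + 1)) :=
  WithLp.toLp 2 (fun i => (if (i : ℕ) < j then 1 else 0) - (j : ℝ) / ((n : ℝ) + 1))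

/-- `ρ = ϖ₁ + ⋯ + ϖₙ`, the vector whose `i`-th coordinate is `(n+2−2i)/2` (`1`-based `i`). -/
noncomputable def rhoA (n : ℕ) : EuclideanSpace ℝ (Fin (n + 1)) :=
  WithLp.toLp 2 (fun i => ((n : ℝ) + 2 - 2 * ((i : ℕ) + 1)) / 2)

/-!
Each `s_j` permutes coordinates, and since `ρ_j − ρ_{j+1} = 1` it changes `⟨v, ρ⟩` by
`v_{j+1} − v_j`. The coordinates of `w ϖ_k` are those of `ϖ_k`, which differ by at most `1`, so
`⟨w ϖ_k, ρ⟩ ≥ ⟨ϖ_k, ρ⟩ − ℓ(w) = k(n − k + 1)/2 − ℓ(w) ≥ n/2 − ℓ(w)`.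
The orbit of `ϖ₁` consists of the vectors `e_{p+1} − ε/(n+1)`, whose pairing with `ρ` is
`(n − 2p)/2`, and each reflection moves `p` by at most one. Reaching `p > n/2` in
`⌊(n+2)/2⌋` steps forces every step to move `p` forward, i.e. `w = s_l ⋯ s₁`.
-/

section

variable {n : ℕ}

theorem sA_apply {j : ℕ} (hj : 1 ≤ j) (hjn : j ≤ n) (v : EuclideanSpace ℝ (Fin (n + 1)))
    (i : Fin (n + 1)) :
    sA n j v i = v (Equiv.swap ⟨j - 1, by omega⟩ ⟨j, by omega⟩ i) := by
  have hi := i.isLt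
  refine congrArg v.ofLp (Fin.ext ?_)
  simp only
  rw [Nat.mod_eq_of_lt (by split_ifs <;> omega), Equiv.swap_apply_def]
  split_ifs <;> simp only [Fin.ext_iff] at * <;> omega

theorem compA_cons (j : ℕ) (l : List ℕ) (v : EuclideanSpace ℝ (Fin (n + 1))) :
    compA n (j :: l) v = sA n j (compA n l v) := rfl

theorem exists_compA_apply_eq (l : List ℕ) (v : EuclideanSpace ℝ (Fin (n + 1)))
    (i : Fin (n + 1)) : ∃ i', compA n l v i = v i' := by
  induction l generalizing i with
  | nil => exact ⟨i, rfl⟩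
  | cons j l ih => exact ih _

theorem rhoA_apply (i : Fin (n + 1)) : rhoA n i = ((n : ℝ) - 2 * (i : ℕ)) / 2 := by
  simp only [rhoA, PiLp.toLp_apply]
  ring

theorem inner_rhoA_eq_sum (v : EuclideanSpace ℝ (Fin (n + 1))) :
    ⟪v, rhoA n⟫ = ∑ i, v i * rhoA n i := by
  simp [PiLp.inner_apply, mul_comm]

theorem sum_range_sub_two_mul (n m : ℕ) :
    ∑ i ∈ Finset.range m, ((n : ℝ) - 2 * i) = m * ((n : ℝ) - m + 1) := by
  induction m with
  | zero => simp
  | succ m ih => rw [Finset.sum_range_succ, ih]; push_cast; ring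

theorem sum_rhoA : ∑ i, rhoA n i = 0 := by
  simp only [rhoA_apply]
  rw [Fin.sum_univ_eq_sum_range (fun i => ((n : ℝ) - 2 * i) / 2), ← Finset.sum_div,
    sum_range_sub_two_mul]
  push_cast
  ring

theorem inner_sA_rhoA {j : ℕ} (hj : 1 ≤ j) (hjn : j ≤ n)
    (v : EuclideanSpace ℝ (Fin (n + 1))) :
    ⟪sA n j v, rhoA n⟫ = ⟪v, rhoA n⟫ + v ⟨j, by omega⟩ - v ⟨j - 1, by omega⟩ := by
  set a : Fin (n + 1) := ⟨j - 1, by omega⟩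
  set b : Fin (n + 1) := ⟨j, by omega⟩
  have hab : a ≠ b := by simp [a, b, Fin.ext_iff]; omega
  have hρ : rhoA n a - rhoA n b = 1 := by
    simp only [rhoA_apply, a, b]
    push_cast [Nat.cast_sub hj]
    ring
  have hswap : ∑ i, v i * (rhoA n (Equiv.swap a b i) - rhoA n i) = v b - v a := by
    rw [Fintype.sum_eq_add a b hab fun i hi => by
      rw [Equiv.swap_apply_of_ne_of_ne hi.1 hi.2, sub_self, mul_zero],
      Equiv.swap_apply_left, Equiv.swap_apply_right]
    linear_combination (v b - v a) * hρ
  calc ⟪sA n j v, rhoA n⟫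
        = ∑ i, v (Equiv.swap a b i) * rhoA n (Equiv.swap a b (Equiv.swap a b i)) := by
        simp only [inner_rhoA_eq_sum, sA_apply hj hjn, Equiv.swap_apply_self]
        rfl
    _ = ∑ i, v i * rhoA n (Equiv.swap a b i) :=
        Equiv.sum_comp (Equiv.swap a b) fun i => v i * rhoA n (Equiv.swap a b i)
    _ = ⟪v, rhoA n⟫ + v b - v a := by
        rw [inner_rhoA_eq_sum, add_sub_assoc, ← hswap, ← Finset.sum_add_distrib]
        exact Finset.sum_congr rfl fun i _ => by ring

theorem le_inner_compA_rhoA {v : EuclideanSpace ℝ (Fin (n + 1))} (hv : ∀ i i', v i - v i' ≤ 1)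
    {l : List ℕ} (hl : ∀ m ∈ l, 1 ≤ m ∧ m ≤ n) :
    ⟪v, rhoA n⟫ - l.length ≤ ⟪compA n l v, rhoA n⟫ := by
  induction l with
  | nil => simp [compA]
  | cons j l ih =>
    obtain ⟨hj, hjn⟩ := hl j List.mem_cons_self
    have ih := ih fun m hm => hl m (List.mem_cons_of_mem _ hm)
    obtain ⟨i, hi⟩ := exists_compA_apply_eq l v ⟨j, by omega⟩
    obtain ⟨i', hi'⟩ := exists_compA_apply_eq l v ⟨j - 1, by omega⟩
    rw [compA_cons, inner_sA_rhoA hj hjn, hi, hi', List.length_cons, Nat.cast_succ]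
    linarith [hv i' i]

theorem wtA_apply_sub_le (k : ℕ) (i i' : Fin (n + 1)) : wtA n k i - wtA n k i' ≤ 1 := by
  simp only [wtA, PiLp.toLp_apply]
  split_ifs <;> linarith

theorem inner_wtA_rhoA {k : ℕ} (hk : k ≤ n) :
    ⟪wtA n k, rhoA n⟫ = k * ((n : ℝ) - k + 1) / 2 := by
  have hsplit : ∀ i, wtA n k i * rhoA n i =
      (if (i : ℕ) < k then ((n : ℝ) - 2 * (i : ℕ)) / 2 else 0) - k / (n + 1) * rhoA n i := by
    intro i
    simp only [wtA, PiLp.toLp_apply, rhoA_apply]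
    split_ifs <;> ring
  have hfilter : (Finset.range (n + 1)).filter (· < k) = Finset.range k := by
    ext i
    simp only [Finset.mem_filter, Finset.mem_range]
    omega
  rw [inner_rhoA_eq_sum, Finset.sum_congr rfl fun i _ => hsplit i, Finset.sum_sub_distrib,
    ← Finset.mul_sum, sum_rhoA, mul_zero, sub_zero,
    Fin.sum_univ_eq_sum_range (fun i => if i < k then ((n : ℝ) - 2 * i) / 2 else 0),
    ← Finset.sum_filter, hfilter, ← Finset.sum_div, sum_range_sub_two_mul]

theorem length_ge_of_inner_compA_wtA_rhoA_neg {k : ℕ} (hk : 1 ≤ k) (hkn : k ≤ n)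
    {l : List ℕ} (hl : ∀ m ∈ l, 1 ≤ m ∧ m ≤ n)
    (h : ⟪compA n l (wtA n k), rhoA n⟫ < 0) :
    (n + 2) / 2 ≤ l.length := by
  have hbound := le_inner_compA_rhoA (wtA_apply_sub_le k) hl
  rw [inner_wtA_rhoA hkn] at hbound
  have hk' : (1 : ℝ) ≤ k := by exact_mod_cast hk
  have hkn' : (k : ℝ) ≤ n := by exact_mod_cast hkn
  have hwt : (n : ℝ) ≤ k * (n - k + 1) := by
    nlinarith [mul_nonneg (sub_nonneg.2 hk') (sub_nonneg.2 hkn')]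
  have hlen : n < 2 * l.length := by
    exact_mod_cast (by linarith : (n : ℝ) < 2 * l.length)
  omega

/-- The weights `eₚ₊₁ − ε/(n+1)` of the standard representation (`0`-based `p`);
they form the orbit of `ϖ₁`. -/
noncomputable def stdWtA (n p : ℕ) : EuclideanSpace ℝ (Fin (n + 1)) :=
  WithLp.toLp 2 (fun i => (if (i : ℕ) = p then 1 else 0) - 1 / ((n : ℝ) + 1))

theorem wtA_one : wtA n 1 = stdWtA n 0 := by
  ext i
  simp [wtA, stdWtA]

theorem sA_stdWtA {j : ℕ} (hj : 1 ≤ j) (hjn : j ≤ n) (p : ℕ) :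
    sA n j (stdWtA n p) = stdWtA n (Equiv.swap (j - 1) j p) := by
  ext i
  have hval : (Equiv.swap (⟨j - 1, by omega⟩ : Fin (n + 1)) ⟨j, by omega⟩ i : ℕ)
      = Equiv.swap (j - 1) j (i : ℕ) := (Fin.val_injective.swap_apply _ _ _).symm
  simp only [sA_apply hj hjn, stdWtA, PiLp.toLp_apply, hval, Equiv.swap_apply_eq_iff]

theorem inner_stdWtA_rhoA {p : ℕ} (hp : p ≤ n) :
    ⟪stdWtA n p, rhoA n⟫ = ((n : ℝ) - 2 * p) / 2 := by
  have hsplit : ∀ i, stdWtA n p i * rhoA n i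
      = (if i = ⟨p, by omega⟩ then rhoA n i else 0) - 1 / (n + 1) * rhoA n i := by
    intro i
    simp only [stdWtA, PiLp.toLp_apply, Fin.ext_iff]
    split_ifs <;> ring
  rw [inner_rhoA_eq_sum, Finset.sum_congr rfl fun i _ => hsplit i, Finset.sum_sub_distrib,
    ← Finset.mul_sum, sum_rhoA, Finset.sum_ite_eq', if_pos (Finset.mem_univ _), rhoA_apply]
  simp

def stdIndex (l : List ℕ) : ℕ := l.foldr (fun j p => Equiv.swap (j - 1) j p) 0

theorem stdIndex_cons (j : ℕ) (l : List ℕ) :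
    stdIndex (j :: l) = Equiv.swap (j - 1) j (stdIndex l) := rfl

theorem swap_pred_self_apply_le (j p : ℕ) : Equiv.swap (j - 1) j p ≤ p + 1 := by
  rw [Equiv.swap_apply_def]
  split_ifs <;> omega

theorem stdIndex_le_length (l : List ℕ) : stdIndex l ≤ l.length := by
  induction l with
  | nil => rfl
  | cons j l ih =>
    rw [stdIndex_cons, List.length_cons]
    exact (swap_pred_self_apply_le j _).trans (by omega)

theorem stdIndex_le {l : List ℕ} (hl : ∀ m ∈ l, m ≤ n) : stdIndex l ≤ n := by
  induction l with
  | nil => exact Nat.zero_le n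
  | cons j l ih =>
    have hj := hl j List.mem_cons_self
    have ih := ih fun m hm => hl m (List.mem_cons_of_mem _ hm)
    rw [stdIndex_cons, Equiv.swap_apply_def]
    split_ifs <;> omega

theorem compA_wtA_one {l : List ℕ} (hl : ∀ m ∈ l, 1 ≤ m ∧ m ≤ n) :
    compA n l (wtA n 1) = stdWtA n (stdIndex l) := by
  induction l with
  | nil => exact wtA_one
  | cons j l ih =>
    obtain ⟨hj, hjn⟩ := hl j List.mem_cons_self
    rw [compA_cons, ih fun m hm => hl m (List.mem_cons_of_mem _ hm), sA_stdWtA hj hjn,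
      stdIndex_cons]

theorem inner_compA_wtA_one_rhoA {l : List ℕ} (hl : ∀ m ∈ l, 1 ≤ m ∧ m ≤ n) :
    ⟪compA n l (wtA n 1), rhoA n⟫ = ((n : ℝ) - 2 * stdIndex l) / 2 := by
  rw [compA_wtA_one hl, inner_stdWtA_rhoA (stdIndex_le fun m hm => (hl m hm).2)]

theorem range_map_sub_succ (t : ℕ) :
    (List.range (t + 1)).map (t + 1 - ·) = (t + 1) :: (List.range t).map (t - ·) := by
  rw [List.range_succ_eq_map, List.map_cons, List.map_map]
  congr 1
  exact List.map_congr_left fun i _ => by simp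

theorem stdIndex_range_map_sub (t : ℕ) : stdIndex ((List.range t).map (t - ·)) = t := by
  induction t with
  | zero => rfl
  | succ t ih =>
    rw [range_map_sub_succ, stdIndex_cons, ih, Nat.add_sub_cancel, Equiv.swap_apply_left]

theorem eq_range_map_sub_of_stdIndex_eq_length {l : List ℕ} (h : stdIndex l = l.length) :
    l = (List.range l.length).map (l.length - ·) := by
  induction l with
  | nil => rfl
  | cons j l ih =>
    rw [stdIndex_cons, List.length_cons] at h
    have hl : stdIndex l = l.length := by
      linarith [swap_pred_self_apply_le j (stdIndex l), stdIndex_le_length l]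
    have hj : j = l.length + 1 := by
      rw [hl, Equiv.swap_apply_def] at h
      split_ifs at h <;> omega
    rw [List.length_cons, range_map_sub_succ, ← ih hl, hj]

end

theorem statement4 (n : ℕ) (hn : 1 ≤ n) :
    IsLeast {k : ℕ | ∃ l : List ℕ, (∀ m ∈ l, 1 ≤ m ∧ m ≤ n) ∧ l.length = k ∧
        ⟪compA n l (wtA n 1), rhoA n⟫ < 0} ((n + 2) / 2) ∧
    (∀ k, 1 ≤ k → k ≤ n → ∀ l : List ℕ, (∀ m ∈ l, 1 ≤ m ∧ m ≤ n) →
        ⟪compA n l (wtA n k), rhoA n⟫ < 0 → (n + 2) / 2 ≤ l.length) ∧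
    (∀ l : List ℕ, (∀ m ∈ l, 1 ≤ m ∧ m ≤ n) → l.length ≤ (n + 2) / 2 →
        ⟪compA n l (wtA n 1), rhoA n⟫ < 0 →
        compA n l = compA n ((List.range ((n + 2) / 2)).map (fun i => (n + 2) / 2 - i))) := by
  set L := (n + 2) / 2
  have hC : ∀ m ∈ (List.range L).map (fun i => L - i), 1 ≤ m ∧ m ≤ n := by
    simp only [List.mem_map, List.mem_range]
    rintro _ ⟨i, hi, rfl⟩
    omega
  refine ⟨⟨⟨_, hC, by simp, ?_⟩, ?_⟩,
    fun _ hk hkn _ hl h => length_ge_of_inner_compA_wtA_rhoA_neg hk hkn hl h, ?_⟩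
  · rw [inner_compA_wtA_one_rhoA hC, stdIndex_range_map_sub]
    have : (n : ℝ) + 1 ≤ 2 * L := by exact_mod_cast (by omega : n + 1 ≤ 2 * L)
    linarith
  · rintro _ ⟨l, hl, rfl, h⟩
    exact length_ge_of_inner_compA_wtA_rhoA_neg le_rfl hn hl h
  · intro l hl hlen h
    rw [inner_compA_wtA_one_rhoA hl] at h
    have hidx : n < 2 * stdIndex l := by
      exact_mod_cast (by linarith : (n : ℝ) < 2 * stdIndex l)
    have hidx_le := stdIndex_le_length l
    have hL : l.length = L := by omega
    rw [eq_range_map_sub_of_stdIndex_eq_length (l := l) (by omega), hL]
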